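/- For every natural number S with 0 ≤ S ≤ 2, let N = S + B where B ~ Binomial(13 − S, 1/2). Then 25000 · P(7 ≤ N ≤ 9) is greater than or equal to each of 5000 · P(1 ≤ N ≤ 3), 15000 · P(4 ≤ N ≤ 6), 100000 · P(10 ≤ N ≤ 12), and 1000000 · P(N = 13). Hence in the two-category model a contestant with at most 2 Sure questions who maximizes expected winnings should select Lucky Range 7–9. -/

import Mathlib

open scoped ENNReal

/-- The distribution on `ℕ` of a `Binomial(n, p)` random variable. -/
noncomputable def binomPMF (p : ℝ≥0∞) (h : p ≤ 1) (n : ℕ) : PMF ℕ :=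
  (PMF.binomial p.toNNReal (by simpa using ENNReal.toNNReal_mono ENNReal.one_ne_top h) n).map Fin.val

/-- The probability that an `ℕ`-valued random variable with distribution `μ` lands in `s`. -/
noncomputable def prob (μ : PMF ℕ) (s : Set ℕ) : ℝ≥0∞ := μ.toMeasure s

/-- The distribution of `S + X + Y` where `X ~ μ` and `Y ~ ν` are independent. -/
noncomputable def shiftedSum (S : ℕ) (μ ν : PMF ℕ) : PMF ℕ :=
  μ.bind fun i => ν.map fun j => S + i + j

/-- In the two-category model, the number of correct answers of a contestant with
`S` Sure questions who guesses on the remaining `13 - S` questions: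
`N = S + B` with `B ~ Binomial(13 - S, 1/2)`. -/
noncomputable def N (S : ℕ) : PMF ℕ := (binomPMF (1/2) (by norm_num) (13 - S)).map (fun b => S + b)

lemma binomPMF_apply_le (p : ℝ≥0∞) (h : p ≤ 1) (n k : ℕ) (hk : k ≤ n) :
    binomPMF p h n k = p ^ k * (1 - p) ^ (n - k) * (n.choose k : ℕ) := by
  rw [binomPMF, PMF.map_apply]
  rw [tsum_eq_single (⟨k, Nat.lt_succ_of_le hk⟩ : Fin (n + 1))]
  · erw [PMF.binomial_apply]
    simp [Fin.last, ENNReal.coe_toNNReal (ne_top_of_le_ne_top ENNReal.one_ne_top h)]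
  · intro b hb
    rw [if_neg]
    intro hkb
    exact hb (by ext; simp [hkb.symm])

lemma N_apply (S k : ℕ) (h1 : S ≤ k) (h2 : k ≤ 13) :
    N S k = (1/2 : ℝ≥0∞) ^ (13 - S) * ((13 - S).choose (k - S) : ℕ) := by
  rw [N, PMF.map_apply, tsum_eq_single (k - S)]
  · rw [if_pos (by omega), binomPMF_apply_le _ _ _ _ (by omega)]
    have h : (1 : ℝ≥0∞) - 1/2 = 1/2 := by
      rw [one_div, ENNReal.one_sub_inv_two]
    rw [h, ← pow_add, show k - S + (13 - S - (k - S)) = 13 - S by omega]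
  · intro b hb
    rw [if_neg]
    omega

lemma N_apply_lt (S k : ℕ) (h : k < S) : N S k = 0 := by
  rw [N, PMF.map_apply]
  rw [ENNReal.tsum_eq_zero]
  intro b
  rw [if_neg]
  omega

lemma prob3 (μ : PMF ℕ) (a b c : ℕ) (hab : a < b) (hbc : b < c) (s : Set ℕ)
    (hs : s = {a, b, c}) : prob μ s = μ a + μ b + μ c := by
  have h2 : s = (({a, b, c} : Finset ℕ) : Set ℕ) := by rw [hs]; simp
  rw [prob, h2, PMF.toMeasure_apply_finset]
  rw [Finset.sum_insert (by simp only [Finset.mem_insert, Finset.mem_singleton]; omega), Finset.sum_insert (by simp only [Finset.mem_singleton]; omega),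
    Finset.sum_singleton, add_assoc]

lemma prob1 (μ : PMF ℕ) (a : ℕ) : prob μ {a} = μ a := by
  rw [prob, PMF.toMeasure_apply_singleton _ _ (measurableSet_singleton a)]

lemma key (n : ℕ) (a b c d : ℝ≥0∞) (h : b * d ≤ a * c) :
    a * ((1/2) ^ n * c) ≥ b * ((1/2) ^ n * d) := by
  calc b * ((1/2) ^ n * d) = (1/2 : ℝ≥0∞) ^ n * (b * d) := by ring
    _ ≤ (1/2 : ℝ≥0∞) ^ n * (a * c) := by gcongr
    _ = a * ((1/2) ^ n * c) := by ring


/-- In the two-category model a contestant with at most 2 Sure questions who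
maximizes expected winnings should select Lucky Range 7–9. -/
theorem lucky13_two_cat_expected_7_9 (S : ℕ) (hS : S ≤ 2) :
    25000 * prob (N S) {k | 7 ≤ k ∧ k ≤ 9} ≥ 5000 * prob (N S) {k | 1 ≤ k ∧ k ≤ 3} ∧
    25000 * prob (N S) {k | 7 ≤ k ∧ k ≤ 9} ≥ 15000 * prob (N S) {k | 4 ≤ k ∧ k ≤ 6} ∧
    25000 * prob (N S) {k | 7 ≤ k ∧ k ≤ 9} ≥ 100000 * prob (N S) {k | 10 ≤ k ∧ k ≤ 12} ∧
    25000 * prob (N S) {k | 7 ≤ k ∧ k ≤ 9} ≥ 1000000 * prob (N S) {13} := by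
  interval_cases S
  · have h13a : prob (N 0) {k | 1 ≤ k ∧ k ≤ 3} = (1/2 : ℝ≥0∞) ^ 13 * 377 := by
      rw [prob3 _ 1 2 3 (by omega) (by omega) _ (by ext k; simp; omega),
        N_apply 0 1 (by omega) (by omega), N_apply 0 2 (by omega) (by omega),
        N_apply 0 3 (by omega) (by omega)]
      norm_num [Nat.choose]
      ring
    have h46 : prob (N 0) {k | 4 ≤ k ∧ k ≤ 6} = (1/2 : ℝ≥0∞) ^ 13 * 3718 := by
      rw [prob3 _ 4 5 6 (by omega) (by omega) _ (by ext k; simp; omega),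
        N_apply 0 4 (by omega) (by omega), N_apply 0 5 (by omega) (by omega),
        N_apply 0 6 (by omega) (by omega)]
      norm_num [Nat.choose]
      ring
    have h79 : prob (N 0) {k | 7 ≤ k ∧ k ≤ 9} = (1/2 : ℝ≥0∞) ^ 13 * 3718 := by
      rw [prob3 _ 7 8 9 (by omega) (by omega) _ (by ext k; simp; omega),
        N_apply 0 7 (by omega) (by omega), N_apply 0 8 (by omega) (by omega),
        N_apply 0 9 (by omega) (by omega)]
      norm_num [Nat.choose]
      ring
    have h1012 : prob (N 0) {k | 10 ≤ k ∧ k ≤ 12} = (1/2 : ℝ≥0∞) ^ 13 * 377 := by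
      rw [prob3 _ 10 11 12 (by omega) (by omega) _ (by ext k; simp; omega),
        N_apply 0 10 (by omega) (by omega), N_apply 0 11 (by omega) (by omega),
        N_apply 0 12 (by omega) (by omega)]
      norm_num [Nat.choose]
      ring
    have h13 : prob (N 0) {13} = (1/2 : ℝ≥0∞) ^ 13 * 1 := by
      rw [prob1, N_apply 0 13 (by omega) (by omega)]
      norm_num [Nat.choose]
    rw [h13a, h46, h79, h1012, h13]
    exact ⟨key 13 25000 5000 3718 377 (by norm_num),
      key 13 25000 15000 3718 3718 (by norm_num),
      key 13 25000 100000 3718 377 (by norm_num),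
      key 13 25000 1000000 3718 1 (by norm_num)⟩
  · have h13a : prob (N 1) {k | 1 ≤ k ∧ k ≤ 3} = (1/2 : ℝ≥0∞) ^ 12 * 79 := by
      rw [prob3 _ 1 2 3 (by omega) (by omega) _ (by ext k; simp; omega),
        N_apply 1 1 (by omega) (by omega), N_apply 1 2 (by omega) (by omega),
        N_apply 1 3 (by omega) (by omega)]
      norm_num [Nat.choose]
      ring
    have h46 : prob (N 1) {k | 4 ≤ k ∧ k ≤ 6} = (1/2 : ℝ≥0∞) ^ 12 * 1507 := by
      rw [prob3 _ 4 5 6 (by omega) (by omega) _ (by ext k; simp; omega),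
        N_apply 1 4 (by omega) (by omega), N_apply 1 5 (by omega) (by omega),
        N_apply 1 6 (by omega) (by omega)]
      norm_num [Nat.choose]
      ring
    have h79 : prob (N 1) {k | 7 ≤ k ∧ k ≤ 9} = (1/2 : ℝ≥0∞) ^ 12 * 2211 := by
      rw [prob3 _ 7 8 9 (by omega) (by omega) _ (by ext k; simp; omega),
        N_apply 1 7 (by omega) (by omega), N_apply 1 8 (by omega) (by omega),
        N_apply 1 9 (by omega) (by omega)]
      norm_num [Nat.choose]
      ring
    have h1012 : prob (N 1) {k | 10 ≤ k ∧ k ≤ 12} = (1/2 : ℝ≥0∞) ^ 12 * 298 := by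
      rw [prob3 _ 10 11 12 (by omega) (by omega) _ (by ext k; simp; omega),
        N_apply 1 10 (by omega) (by omega), N_apply 1 11 (by omega) (by omega),
        N_apply 1 12 (by omega) (by omega)]
      norm_num [Nat.choose]
      ring
    have h13 : prob (N 1) {13} = (1/2 : ℝ≥0∞) ^ 12 * 1 := by
      rw [prob1, N_apply 1 13 (by omega) (by omega)]
      norm_num [Nat.choose]
    rw [h13a, h46, h79, h1012, h13]
    exact ⟨key 12 25000 5000 2211 79 (by norm_num),
      key 12 25000 15000 2211 1507 (by norm_num),
      key 12 25000 100000 2211 298 (by norm_num),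
      key 12 25000 1000000 2211 1 (by norm_num)⟩
  · have h13a : prob (N 2) {k | 1 ≤ k ∧ k ≤ 3} = (1/2 : ℝ≥0∞) ^ 11 * 12 := by
      rw [prob3 _ 1 2 3 (by omega) (by omega) _ (by ext k; simp; omega),
        N_apply_lt 2 1 (by omega), N_apply 2 2 (by omega) (by omega),
        N_apply 2 3 (by omega) (by omega)]
      norm_num [Nat.choose]
      ring
    have h46 : prob (N 2) {k | 4 ≤ k ∧ k ≤ 6} = (1/2 : ℝ≥0∞) ^ 11 * 550 := by
      rw [prob3 _ 4 5 6 (by omega) (by omega) _ (by ext k; simp; omega),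
        N_apply 2 4 (by omega) (by omega), N_apply 2 5 (by omega) (by omega),
        N_apply 2 6 (by omega) (by omega)]
      norm_num [Nat.choose]
      ring
    have h79 : prob (N 2) {k | 7 ≤ k ∧ k ≤ 9} = (1/2 : ℝ≥0∞) ^ 11 * 1254 := by
      rw [prob3 _ 7 8 9 (by omega) (by omega) _ (by ext k; simp; omega),
        N_apply 2 7 (by omega) (by omega), N_apply 2 8 (by omega) (by omega),
        N_apply 2 9 (by omega) (by omega)]
      norm_num [Nat.choose]
      ring
    have h1012 : prob (N 2) {k | 10 ≤ k ∧ k ≤ 12} = (1/2 : ℝ≥0∞) ^ 11 * 231 := by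
      rw [prob3 _ 10 11 12 (by omega) (by omega) _ (by ext k; simp; omega),
        N_apply 2 10 (by omega) (by omega), N_apply 2 11 (by omega) (by omega),
        N_apply 2 12 (by omega) (by omega)]
      norm_num [Nat.choose]
      ring
    have h13 : prob (N 2) {13} = (1/2 : ℝ≥0∞) ^ 11 * 1 := by
      rw [prob1, N_apply 2 13 (by omega) (by omega)]
      norm_num [Nat.choose]
    rw [h13a, h46, h79, h1012, h13]
    exact ⟨key 11 25000 5000 1254 12 (by norm_num),
      key 11 25000 15000 1254 550 (by norm_num),
      key 11 25000 100000 1254 231 (by norm_num),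
      key 11 25000 1000000 1254 1 (by norm_num)⟩
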